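/- Let w' < w be valuations on K(X) with w' taking values in a subgroup of the value group of w. Then: (i) Φ(w', w) = [φ]_{w'} for every φ ∈ Φ(w', w); (ii) if w' < ν ≤ w is a chain of valuations, then Φ(w', w) = Φ(w', ν), and in particular, for every f ∈ K[X], w'(f) = w(f) if and only if w'(f) = ν(f). -/

import Mathlib

namespace MLV

open Polynomial

/-- An additive valuation on a commutative ring `R` with values in `Γ ∪ {∞}`
(written additively, with the `min` convention), thought of as the restriction
to `R` of a valuation on its fraction field. -/
structure ValOn (R : Type*) [CommRing R] (Γ : Type*) [AddCommGroup Γ] [LinearOrder Γ] [IsOrderedAddMonoid Γ] where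
  toFun : R → WithTop Γ
  map_zero' : toFun 0 = ⊤
  ne_top' : ∀ f : R, f ≠ 0 → toFun f ≠ ⊤
  map_mul' : ∀ f g : R, toFun (f * g) = toFun f + toFun g
  add_min' : ∀ f g : R, min (toFun f) (toFun g) ≤ toFun (f + g)

variable {K : Type*} [Field K] {Γ : Type*} [AddCommGroup Γ] [LinearOrder Γ] [IsOrderedAddMonoid Γ]

/-- `w` (a valuation on `K(X)`, restricted to `K[X]`) extends the valuation `v` of `K`. -/
def Extends (w : ValOn (Polynomial K) Γ) (v : ValOn K Γ) : Prop :=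
  ∀ c : K, w.toFun (C c) = v.toFun c

/-- `wbar` (a valuation on `K̄(X)`) is a common extension of `w` and of `vbar`. -/
def IsCommonExt {L : Type*} [Field L] [Algebra K L]
    (wbar : ValOn (Polynomial L) Γ) (w : ValOn (Polynomial K) Γ) (vbar : ValOn L Γ) : Prop :=
  (∀ f : Polynomial K, wbar.toFun (f.map (algebraMap K L)) = w.toFun f) ∧
  (∀ c : L, wbar.toFun (C c) = vbar.toFun c)

/-- `δ(f) = max { w̄(X - α) : α ∈ K̄, f(α) = 0 }` (as an element of `WithBot (WithTop Γ)`,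
the value `⊥` corresponding to a polynomial without roots). -/
noncomputable def delta {L : Type*} [Field L] [Algebra K L]
    (wbar : ValOn (Polynomial L) Γ) (f : Polynomial K) : WithBot (WithTop Γ) :=
  (((f.map (algebraMap K L)).roots).map
    fun α => ((wbar.toFun (X - C α) : WithTop Γ) : WithBot (WithTop Γ))).sup

/-- `Q` is an abstract key polynomial for `w` (with respect to the common extension `wbar`
computing `δ`): `Q` is monic and `δ(f) < δ(Q)` for every nonzero `f` with `deg f < deg Q`. -/
def IsABKP {L : Type*} [Field L] [Algebra K L]
    (wbar : ValOn (Polynomial L) Γ) (Q : Polynomial K) : Prop :=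
  Q.Monic ∧ ∀ f : Polynomial K, f ≠ 0 → f.degree < Q.degree → delta wbar f < delta wbar Q

/-- The `Q`-truncation `w_Q` of `w`: on the `Q`-expansion `f = ∑ fᵢ Qⁱ` it equals
`min_i w(fᵢ Qⁱ)`. -/
noncomputable def truncVal (w : ValOn (Polynomial K) Γ) (Q f : Polynomial K) : WithTop Γ :=
  (Finset.range (f.natDegree + 1)).inf fun i => w.toFun ((f /ₘ Q ^ i) %ₘ Q * Q ^ i)

/-- `f ∼_u g` : `u(f - g) > u f = u g`. -/
def EquivMod (u : Polynomial K → WithTop Γ) (f g : Polynomial K) : Prop :=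
  u f < u (f - g) ∧ u f = u g

/-- `f ∣_u g` : `g ∼_u f h` for some `h`. -/
def DvdMod (u : Polynomial K → WithTop Γ) (f g : Polynomial K) : Prop :=
  ∃ h : Polynomial K, EquivMod u g (f * h)

/-- A key polynomial for `u`: monic, `u`-irreducible and `u`-minimal. -/
def IsKeyPol (u : Polynomial K → WithTop Γ) (φ : Polynomial K) : Prop :=
  φ.Monic ∧
  (∀ h q : Polynomial K, DvdMod u φ (h * q) → DvdMod u φ h ∨ DvdMod u φ q) ∧
  (∀ h : Polynomial K, h ≠ 0 → DvdMod u φ h → φ.degree ≤ h.degree)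

/-- A key polynomial for `u` of minimal degree (i.e. of degree `deg(u)`). -/
def IsMinKeyPol (u : Polynomial K → WithTop Γ) (φ : Polynomial K) : Prop :=
  IsKeyPol u φ ∧ ∀ ψ : Polynomial K, IsKeyPol u ψ → φ.degree ≤ ψ.degree

/-- `u ≤ u'` pointwise on `K[X]`. -/
def FnLe (u u' : Polynomial K → WithTop Γ) : Prop :=
  ∀ f : Polynomial K, u f ≤ u' f

/-- `u < u'` : `u ≤ u'` and `u f < u' f` for some `f`. -/
def FnLt (u u' : Polynomial K → WithTop Γ) : Prop :=
  FnLe u u' ∧ ∃ f : Polynomial K, u f < u' f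

/-- `g ∈ Φ(u, u')` : `g` is monic of minimal degree with `u g < u' g`. -/
def InPhi (u u' : Polynomial K → WithTop Γ) (g : Polynomial K) : Prop :=
  g.Monic ∧ u g < u' g ∧
  ∀ h : Polynomial K, h.Monic → u h < u' h → g.degree ≤ h.degree

/-- The value at `f` of the augmented valuation `[u; φ, γ]`, computed via the
`φ`-expansion `f = ∑ fᵢ φⁱ` as `min_i (u fᵢ + i γ)`. -/
noncomputable def augVal (u : Polynomial K → WithTop Γ) (φ : Polynomial K) (γ : Γ)
    (f : Polynomial K) : WithTop Γ :=
  (Finset.range (f.natDegree + 1)).inf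
    fun i => u ((f /ₘ φ ^ i) %ₘ φ) + i • ((γ : WithTop Γ))

/-- `u' = [u; φ, γ]` is the ordinary augmentation of `u` at the key polynomial `φ`
with value `γ > u φ`. -/
def IsOrdAug (u : Polynomial K → WithTop Γ) (φ : Polynomial K) (γ : Γ)
    (u' : Polynomial K → WithTop Γ) : Prop :=
  IsKeyPol u φ ∧ u φ < (γ : WithTop Γ) ∧ ∀ f : Polynomial K, u' f = augVal u φ γ f

/-- A continuous family of augmentations `(ρ_i = [w'; χ_i, γ_i])_{i ∈ ι}` of `w'`. -/
structure ContFamily (w' : ValOn (Polynomial K) Γ) (ι : Type*) [LinearOrder ι] where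
  chi : ι → Polynomial K
  gam : ι → Γ
  rho : ι → ValOn (Polynomial K) Γ
  no_last : ∀ i : ι, ∃ j : ι, i < j
  gam_mono : StrictMono gam
  aug : ∀ i : ι, IsOrdAug w'.toFun (chi i) (gam i) (rho i).toFun
  deg_eq : ∀ i j : ι, (chi i).degree = (chi j).degree
  key_step : ∀ i j : ι, i < j → IsKeyPol (rho i).toFun (chi j)
  not_equiv : ∀ i j : ι, i < j → ¬ EquivMod (rho i).toFun (chi j) (chi i)
  step : ∀ i j : ι, i < j → IsOrdAug (rho i).toFun (chi j) (gam j) (rho j).toFun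

/-- `f` is `W`-stable with stable value `c`. -/
def StableAt {w' : ValOn (Polynomial K) Γ} {ι : Type*} [LinearOrder ι]
    (F : ContFamily w' ι) (f : Polynomial K) (c : WithTop Γ) : Prop :=
  ∃ i0 : ι, ∀ i : ι, i0 ≤ i → (F.rho i).toFun f = c

/-- `f` is `W`-stable. -/
def IsStable {w' : ValOn (Polynomial K) Γ} {ι : Type*} [LinearOrder ι]
    (F : ContFamily w' ι) (f : Polynomial K) : Prop :=
  ∃ c : WithTop Γ, StableAt F f c

/-- The valuation `w` is the stable limit of the family `F`. -/
def IsStableLimit {w' : ValOn (Polynomial K) Γ} {ι : Type*} [LinearOrder ι]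
    (F : ContFamily w' ι) (w : ValOn (Polynomial K) Γ) : Prop :=
  ∀ f : Polynomial K, StableAt F f (w.toFun f)

/-- `Q` is a MacLane–Vaquié limit key polynomial for `F`: monic, `F`-unstable,
of minimal degree among unstable polynomials. -/
def IsLimitKP {w' : ValOn (Polynomial K) Γ} {ι : Type*} [LinearOrder ι]
    (F : ContFamily w' ι) (Q : Polynomial K) : Prop :=
  Q.Monic ∧ ¬ IsStable F Q ∧ ∀ g : Polynomial K, ¬ IsStable F g → Q.degree ≤ g.degree

/-- The continuous family `F` is essential: `deg(W) < m_∞ < ∞`. -/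
def IsEssential {w' : ValOn (Polynomial K) Γ} {ι : Type*} [LinearOrder ι]
    (F : ContFamily w' ι) : Prop :=
  (∃ f : Polynomial K, ¬ IsStable F f) ∧
  ∀ (i : ι) (f : Polynomial K), ¬ IsStable F f → (F.chi i).degree < f.degree

/-- `w = [F; Q, γ]` is the limit augmentation of the family `F` at the limit key
polynomial `Q` with value `γ`: on `Q`-expansions, `w f = min_i (ρ_W(fᵢ) + iγ)`, which
since the coefficients are stable is the eventual value of `[ρ_i; Q, γ]` on `f`. -/
def IsLimitAug {w' : ValOn (Polynomial K) Γ} {ι : Type*} [LinearOrder ι]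
    (F : ContFamily w' ι) (Q : Polynomial K) (γ : Γ)
    (w : ValOn (Polynomial K) Γ) : Prop :=
  IsLimitKP F Q ∧ (∀ i : ι, (F.rho i).toFun Q < (γ : WithTop Γ)) ∧
  ∀ f : Polynomial K, ∃ i0 : ι, ∀ i : ι, i0 ≤ i → w.toFun f = augVal (F.rho i).toFun Q γ f

/-- `w` is a depth-zero valuation `w_{α,δ}` over `v`. -/
def IsDepthZero (v : ValOn K Γ) (w : ValOn (Polynomial K) Γ) : Prop :=
  ∃ (α : K) (d : Γ), ∀ f : Polynomial K,
    w.toFun f = (Finset.range (f.natDegree + 1)).inf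
      fun i => v.toFun (((Polynomial.taylor α) f).coeff i) + i • ((d : WithTop Γ))

/-- An ordinary augmentation step of a MacLane–Vaquié chain:
`u' = [u; φ, γ]` with `deg(u) < deg Φ(u, u')`. -/
def OrdMLVStep (u u' : Polynomial K → WithTop Γ) (φ : Polynomial K) (γ : Γ) : Prop :=
  IsOrdAug u φ γ u' ∧
  ∀ ψ g : Polynomial K, IsMinKeyPol u ψ → InPhi u u' g → ψ.degree < g.degree

/-- A limit augmentation step of a MacLane–Vaquié chain, with the underlying essential
continuous family `F` made explicit: `w = [F; φ, γ]`, `deg(w') = deg Φ(w', w)` and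
`φprev ∉ Φ(w', w)`. -/
def LimMLVStepWith {w' : ValOn (Polynomial K) Γ} {ι : Type*} [LinearOrder ι]
    (F : ContFamily w' ι) (w : ValOn (Polynomial K) Γ)
    (φprev φ : Polynomial K) (γ : Γ) : Prop :=
  IsEssential F ∧ IsLimitAug F φ γ w ∧
  (∀ ψ g : Polynomial K, IsMinKeyPol w'.toFun ψ → InPhi w'.toFun w.toFun g →
    ψ.degree = g.degree) ∧
  ¬ InPhi w'.toFun w.toFun φprev

/-- A limit augmentation step of a MacLane–Vaquié chain (the underlying essential
continuous family being existentially quantified). -/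
def LimMLVStep (w' w : ValOn (Polynomial K) Γ) (φprev φ : Polynomial K) (γ : Γ) : Prop :=
  ∃ (ι : Type) (li : LinearOrder ι) (F : @ContFamily K _ Γ _ _ _ w' ι li),
    @LimMLVStepWith K _ Γ _ _ _ w' ι li F w φprev φ γ

/-- Membership in the index set `I`: `I = ℕ` if `o = none`, and `I = {0, …, N}`
if `o = some N`. -/
def InIdx (o : Option ℕ) (j : ℕ) : Prop :=
  ∀ N : ℕ, o = some N → j ≤ N

/-- An induced complete sequence `{Q_i}_{i ∈ Δ}` of abstract key polynomials for `w`: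
a complete sequence of ABKPs, organized in blocks `Δ_j = {j} ∪ ϑ_j` (for `j` in
`I = {0,…,N}` or `I = ℕ`), satisfying the properties of Remark 1.3.  Here `blk i`
is the block of an index `i ∈ Δ`, `main j ∈ Δ` is the distinguished first element
of the block `Δ_j`, and `ϑ_j = {i ∈ Δ | blk i = j, i ≠ main j}`. -/
structure ICS {L : Type*} [Field L] [Algebra K L]
    (wbar : ValOn (Polynomial L) Γ) (w : ValOn (Polynomial K) Γ)
    (Δ : Type*) [LinearOrder Δ] where
  Q : Δ → Polynomial K
  abkp : ∀ i : Δ, IsABKP wbar (Q i)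
  wf : WellFoundedLT Δ
  delta_mono : ∀ i i' : Δ, i < i' → delta wbar (Q i) < delta wbar (Q i')
  wval_mono : ∀ i i' : Δ, i < i' → w.toFun (Q i) < w.toFun (Q i')
  complete : ∀ f : Polynomial K, f ≠ 0 →
    ∃ i : Δ, (Q i).degree ≤ f.degree ∧ truncVal w (Q i) f = w.toFun f
  Ifin : Option ℕ
  blk : Δ → ℕ
  main : ℕ → Δ
  blk_mono : ∀ i i' : Δ, i ≤ i' → blk i ≤ blk i'
  blk_mem : ∀ i : Δ, InIdx Ifin (blk i)
  blk_main : ∀ j : ℕ, InIdx Ifin j → blk (main j) = j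
  main_min : ∀ (j : ℕ) (i : Δ), blk i = j → main j ≤ i
  theta_no_last : ∀ i : Δ, i ≠ main (blk i) →
    ∃ i' : Δ, blk i' = blk i ∧ i' ≠ main (blk i) ∧ i < i'
  deg_blk_eq : ∀ i i' : Δ, blk i = blk i' → (Q i).degree = (Q i').degree
  deg_blk_lt : ∀ i i' : Δ, blk i < blk i' → (Q i).degree < (Q i').degree
  degQ0 : (Q (main 0)).degree = 1


/-! For `φ ∈ Φ(w', w)`, the polynomials `f` with `w'(f) < w(f)` are exactly those with
`φ ∣_{w'} f`: dividing `f` by `φ` leaves a remainder of degree `< deg φ`, on which `w'` and `w`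
agree by minimality of `deg φ`, so `f ∼_{w'} φ (f /ₘ φ)`. This makes `φ` a key polynomial for
`w'`, and any two elements of `Φ(w', w)` differ by a polynomial of smaller degree, which forces
them to be `w'`-equivalent. In a chain `w' < ν ≤ w` the same division argument shows that an
element of `Φ(w', ν)` lies in `Φ(w', w)`, so `w' < w` and `w' < ν` are both detected by
`w'`-divisibility by one and the same polynomial. -/

namespace ValOn

variable {R : Type*} [CommRing R]

lemma map_one [Nontrivial R] (u : ValOn R Γ) : u.toFun 1 = 0 := by
  have h := u.map_mul' 1 1
  rw [mul_one] at h
  lift u.toFun 1 to Γ using u.ne_top' 1 one_ne_zero with a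
  rw [← WithTop.coe_add, WithTop.coe_inj] at h
  rw [left_eq_add.mp h, WithTop.coe_zero]

def toAddValuation [Nontrivial R] (u : ValOn R Γ) : AddValuation R (WithTop Γ) :=
  AddValuation.of u.toFun u.map_zero' u.map_one u.add_min' u.map_mul'

lemma map_sub_swap [Nontrivial R] (u : ValOn R Γ) (f g : R) :
    u.toFun (f - g) = u.toFun (g - f) :=
  u.toAddValuation.map_sub_swap f g

lemma map_sub_eq_of_lt_left [Nontrivial R] (u : ValOn R Γ) {f g : R}
    (h : u.toFun f < u.toFun g) : u.toFun (f - g) = u.toFun f :=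
  u.toAddValuation.map_sub_eq_of_lt_left h

lemma map_sub_eq_of_lt_right [Nontrivial R] (u : ValOn R Γ) {f g : R}
    (h : u.toFun g < u.toFun f) : u.toFun (f - g) = u.toFun g :=
  u.toAddValuation.map_sub_eq_of_lt_right h

lemma ne_zero_of_lt {u W : ValOn R Γ} {f : R} (h : u.toFun f < W.toFun f) : f ≠ 0 := by
  rintro rfl
  rw [u.map_zero'] at h
  exact not_top_lt h

end ValOn

variable {u ν W : ValOn (Polynomial K) Γ}

lemma equivMod_of_min_lt_sub {f g : Polynomial K}
    (h : min (u.toFun f) (u.toFun g) < u.toFun (f - g)) : EquivMod u.toFun f g := by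
  rcases lt_trichotomy (u.toFun f) (u.toFun g) with hfg | hfg | hfg
  · rw [u.map_sub_eq_of_lt_left hfg, min_eq_left hfg.le] at h
    exact absurd h (lt_irrefl _)
  · rw [hfg, min_self] at h
    exact ⟨hfg ▸ h, hfg⟩
  · rw [u.map_sub_eq_of_lt_right hfg, min_eq_right hfg.le] at h
    exact absurd h (lt_irrefl _)

lemma EquivMod.symm {f g : Polynomial K} (h : EquivMod u.toFun f g) : EquivMod u.toFun g f :=
  ⟨by rw [← h.2, u.map_sub_swap]; exact h.1, h.2.symm⟩

lemma EquivMod.ne_zero {f g : Polynomial K} (h : EquivMod u.toFun f g) : g ≠ 0 := by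
  rintro rfl
  exact lt_irrefl _ (by simpa only [sub_zero] using h.1)

lemma EquivMod.lt_of_lt (hle : FnLe u.toFun W.toFun) {f g : Polynomial K}
    (h : EquivMod u.toFun f g) (hg : u.toFun g < W.toFun g) : u.toFun f < W.toFun f :=
  calc u.toFun f < min (W.toFun (f - g)) (W.toFun g) :=
        lt_min (h.1.trans_le (hle _)) (h.2 ▸ hg)
    _ ≤ W.toFun f := by simpa only [sub_add_cancel] using W.add_min' (f - g) g

lemma EquivMod.lt_iff (hle : FnLe u.toFun W.toFun) {f g : Polynomial K}
    (h : EquivMod u.toFun f g) : u.toFun f < W.toFun f ↔ u.toFun g < W.toFun g :=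
  ⟨h.symm.lt_of_lt hle, h.lt_of_lt hle⟩

lemma map_C_eq_of_fnLe (hle : FnLe u.toFun W.toFun) (c : K) :
    u.toFun (C c) = W.toFun (C c) := by
  rcases eq_or_ne c 0 with rfl | hc
  · rw [C_0, u.map_zero', W.map_zero']
  have hunit : ∀ v : ValOn (Polynomial K) Γ, v.toFun (C c) + v.toFun (C c⁻¹) = 0 := fun v => by
    rw [← v.map_mul', ← C_mul, mul_inv_cancel₀ hc, C_1, v.map_one]
  refine (hle _).antisymm (not_lt.mp fun hlt => ?_)
  have := WithTop.add_lt_add_of_lt_of_le (u.ne_top' _ (C_ne_zero.mpr (inv_ne_zero hc)))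
    hlt (hle (C c⁻¹))
  rw [hunit u, hunit W] at this
  exact lt_irrefl _ this

lemma mul_C_lt_iff (hle : FnLe u.toFun W.toFun) {c : K} (hc : c ≠ 0) (f : Polynomial K) :
    u.toFun (f * C c) < W.toFun (f * C c) ↔ u.toFun f < W.toFun f := by
  rw [u.map_mul', W.map_mul', ← map_C_eq_of_fnLe hle]
  exact WithTop.add_lt_add_iff_right (u.ne_top' _ (C_ne_zero.mpr hc))

lemma mul_lt_of_lt_left (hle : FnLe u.toFun W.toFun) {g q : Polynomial K}
    (hg : u.toFun g < W.toFun g) (hq : q ≠ 0) : u.toFun (g * q) < W.toFun (g * q) := by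
  rw [u.map_mul', W.map_mul']
  exact WithTop.add_lt_add_of_lt_of_le (u.ne_top' q hq) hg (hle q)

lemma lt_or_lt_of_mul_lt (hle : FnLe u.toFun W.toFun) {h q : Polynomial K}
    (hhq : u.toFun (h * q) < W.toFun (h * q)) :
    u.toFun h < W.toFun h ∨ u.toFun q < W.toFun q := by
  by_contra! heq
  rw [u.map_mul', W.map_mul', (hle h).antisymm heq.1, (hle q).antisymm heq.2] at hhq
  exact lt_irrefl _ hhq

lemma exists_inPhi (hlt : FnLt u.toFun W.toFun) : ∃ φ, InPhi u.toFun W.toFun φ := by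
  classical
  have hdeg : ∃ n, ∃ p : Polynomial K, p.Monic ∧ u.toFun p < W.toFun p ∧ p.natDegree = n := by
    obtain ⟨f, hf⟩ := hlt.2
    have hf0 := ValOn.ne_zero_of_lt hf
    exact ⟨_, f * C f.leadingCoeff⁻¹, monic_mul_leadingCoeff_inv hf0,
      (mul_C_lt_iff hlt.1 (inv_ne_zero (leadingCoeff_ne_zero.mpr hf0)) f).mpr hf, rfl⟩
  obtain ⟨p, hp, hpW, hpdeg⟩ := Nat.find_spec hdeg
  refine ⟨p, hp, hpW, fun h hh hhW => ?_⟩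
  rw [degree_eq_natDegree hp.ne_zero, degree_eq_natDegree hh.ne_zero]
  exact WithBot.coe_le_coe.mpr (hpdeg ▸ Nat.find_min' hdeg ⟨h, hh, hhW, rfl⟩)

namespace InPhi

variable {φ : Polynomial K}

lemma degree_le (hle : FnLe u.toFun W.toFun) (hφ : InPhi u.toFun W.toFun φ) {f : Polynomial K}
    (hf : u.toFun f < W.toFun f) : φ.degree ≤ f.degree := by
  have hf0 := ValOn.ne_zero_of_lt hf
  have hc := inv_ne_zero (leadingCoeff_ne_zero.mpr hf0)
  simpa only [degree_mul_leadingCoeff_inv f hf0] using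
    hφ.2.2 _ (monic_mul_leadingCoeff_inv hf0) ((mul_C_lt_iff hle hc f).mpr hf)

lemma eq_of_degree_lt (hle : FnLe u.toFun W.toFun) (hφ : InPhi u.toFun W.toFun φ)
    {f : Polynomial K} (hf : f.degree < φ.degree) : u.toFun f = W.toFun f :=
  (hle f).antisymm (not_lt.mp fun h => (hφ.degree_le hle h).not_gt hf)

lemma degree_pos (hφ : InPhi u.toFun W.toFun φ) : 0 < φ.degree := by
  by_contra! h
  have hφ1 : φ = 1 := hφ.1.degree_le_zero_iff_eq_one.mp h
  have := hφ.2.1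
  rw [hφ1, u.map_one, W.map_one] at this
  exact lt_irrefl _ this

lemma equivMod_mul_divByMonic (hle : FnLe u.toFun W.toFun) (hφ : InPhi u.toFun W.toFun φ)
    {f : Polynomial K} (hf : u.toFun f < W.toFun f) : EquivMod u.toFun f (φ * (f /ₘ φ)) := by
  set q := f /ₘ φ
  have hfr : f - φ * q = f %ₘ φ := (eq_sub_of_add_eq (modByMonic_add_div f φ)).symm
  have hr : u.toFun (f - φ * q) = W.toFun (f - φ * q) :=
    hφ.eq_of_degree_lt hle (hfr ▸ degree_modByMonic_lt f hφ.1)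
  have hq : q ≠ 0 := by
    rintro hq
    rw [hq, mul_zero, sub_zero] at hr
    exact hf.ne hr
  suffices hlt : u.toFun (φ * q) < u.toFun (f - φ * q) by
    have hfq : u.toFun f = u.toFun (φ * q) := u.toAddValuation.map_eq_of_lt_sub hlt
    exact ⟨hfq ▸ hlt, hfq⟩
  -- otherwise `W (f - φ q)` would lie strictly below both `W f` and `W (φ q)`
  by_contra! hrq
  have hrf : W.toFun (f - φ * q) < W.toFun f := by
    refine hr ▸ lt_of_le_of_lt ?_ hf
    simpa only [sub_add_cancel, min_eq_left hrq] using u.add_min' (f - φ * q) (φ * q)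
  have hrφq : W.toFun (f - φ * q) < W.toFun (φ * q) :=
    hr ▸ hrq.trans_lt (mul_lt_of_lt_left hle hφ.2.1 hq)
  exact (lt_min hrf hrφq).not_ge (W.toAddValuation.map_sub f (φ * q))

lemma dvdMod_iff (hle : FnLe u.toFun W.toFun) (hφ : InPhi u.toFun W.toFun φ)
    {f : Polynomial K} : DvdMod u.toFun φ f ↔ u.toFun f < W.toFun f :=
  ⟨fun ⟨_, h⟩ => h.lt_of_lt hle (mul_lt_of_lt_left hle hφ.2.1 (mul_ne_zero_iff.mp h.ne_zero).2),
    fun hf => ⟨_, hφ.equivMod_mul_divByMonic hle hf⟩⟩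

lemma isKeyPol (hle : FnLe u.toFun W.toFun) (hφ : InPhi u.toFun W.toFun φ) :
    IsKeyPol u.toFun φ := by
  refine ⟨hφ.1, fun h q hhq => ?_, fun h _ hh => hφ.degree_le hle ((hφ.dvdMod_iff hle).mp hh)⟩
  simp only [hφ.dvdMod_iff hle] at hhq ⊢
  exact lt_or_lt_of_mul_lt hle hhq

lemma equivMod (hle : FnLe u.toFun W.toFun) (hφ : InPhi u.toFun W.toFun φ)
    {g : Polynomial K} (hg : InPhi u.toFun W.toFun g) : EquivMod u.toFun g φ := by
  have hdeg : g.degree = φ.degree := (hg.2.2 φ hφ.1 hφ.2.1).antisymm (hφ.2.2 g hg.1 hg.2.1)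
  have hsub : (g - φ).degree < φ.degree :=
    hdeg ▸ degree_sub_lt_left hdeg hg.1.ne_zero (by rw [hg.1.leadingCoeff, hφ.1.leadingCoeff])
  refine equivMod_of_min_lt_sub ?_
  calc min (u.toFun g) (u.toFun φ) < min (W.toFun g) (W.toFun φ) := min_lt_min hg.2.1 hφ.2.1
    _ ≤ W.toFun (g - φ) := W.toAddValuation.map_sub g φ
    _ = u.toFun (g - φ) := (hφ.eq_of_degree_lt hle hsub).symm

lemma of_isKeyPol_of_equivMod (hle : FnLe u.toFun W.toFun) (hφ : InPhi u.toFun W.toFun φ)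
    {g : Polynomial K} (hg : IsKeyPol u.toFun g) (hgφ : EquivMod u.toFun g φ) :
    InPhi u.toFun W.toFun g := by
  have hφg : DvdMod u.toFun g φ := ⟨1, by simpa only [mul_one] using hgφ.symm⟩
  exact ⟨hg.1, hgφ.lt_of_lt hle hφ.2.1,
    fun h hh hhW => (hg.2.2 φ hφ.1.ne_zero hφg).trans (hφ.2.2 h hh hhW)⟩

lemma of_fnLe_of_fnLe (huν : FnLe u.toFun ν.toFun) (hνW : FnLe ν.toFun W.toFun)
    (hφ : InPhi u.toFun W.toFun φ) {φ₀ : Polynomial K} (hφ₀ : InPhi u.toFun ν.toFun φ₀) :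
    InPhi u.toFun W.toFun φ₀ := by
  have huW : FnLe u.toFun W.toFun := fun f => (huν f).trans (hνW f)
  have hφ₀W : u.toFun φ₀ < W.toFun φ₀ := hφ₀.2.1.trans_le (hνW φ₀)
  refine ⟨hφ₀.1, hφ₀W, fun h hh hhW => le_trans ?_ (hφ.2.2 h hh hhW)⟩
  by_contra! hdeg
  -- both factors of `φ (φ₀ /ₘ φ)` have degree `< deg φ₀`, so `u` and `ν` agree on it
  have hq : (φ₀ /ₘ φ).degree < φ₀.degree :=
    degree_divByMonic_lt φ₀ φ hφ₀.1.ne_zero hφ.degree_pos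
  have hφq : ¬ u.toFun (φ * (φ₀ /ₘ φ)) < ν.toFun (φ * (φ₀ /ₘ φ)) := by
    rw [u.map_mul', ν.map_mul', hφ₀.eq_of_degree_lt huν hdeg, hφ₀.eq_of_degree_lt huν hq]
    exact lt_irrefl _
  exact hφq (((hφ.equivMod_mul_divByMonic huW hφ₀W).lt_iff huν).mp hφ₀.2.1)

end InPhi

lemma lt_iff_lt_of_fnLt_of_fnLe (huν : FnLt u.toFun ν.toFun) (hνW : FnLe ν.toFun W.toFun)
    (f : Polynomial K) : u.toFun f < W.toFun f ↔ u.toFun f < ν.toFun f := by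
  have huW : FnLt u.toFun W.toFun :=
    ⟨fun f => (huν.1 f).trans (hνW f), huν.2.imp fun f hf => hf.trans_le (hνW f)⟩
  obtain ⟨φ₀, hφ₀⟩ := exists_inPhi huν
  obtain ⟨φ, hφ⟩ := exists_inPhi huW
  rw [← hφ₀.dvdMod_iff huν.1, ← (hφ.of_fnLe_of_fnLe huν.1 hνW hφ₀).dvdMod_iff huW.1]

/-- for valuations `w' < w` on `K(X)`: (i) `Φ(w', w) = [φ]_{w'}` for
every `φ ∈ Φ(w', w)`; (ii) for any chain `w' < ν ≤ w`, `Φ(w', w) = Φ(w', ν)` and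
`w'(f) = w(f) ↔ w'(f) = ν(f)` for all `f ∈ K[X]`. -/
theorem inPhi_eq_equivClass_and_chain
    {K : Type*} [Field K] {Γ : Type*} [AddCommGroup Γ] [LinearOrder Γ] [IsOrderedAddMonoid Γ]
    (w' w : ValOn (Polynomial K) Γ) (hlt : FnLt w'.toFun w.toFun) :
    (∀ φ : Polynomial K, InPhi w'.toFun w.toFun φ →
      ∀ g : Polynomial K, InPhi w'.toFun w.toFun g ↔
        (IsKeyPol w'.toFun g ∧ EquivMod w'.toFun g φ)) ∧
    (∀ ν : ValOn (Polynomial K) Γ, FnLt w'.toFun ν.toFun → FnLe ν.toFun w.toFun →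
      (∀ g : Polynomial K, InPhi w'.toFun w.toFun g ↔ InPhi w'.toFun ν.toFun g) ∧
      (∀ f : Polynomial K, w'.toFun f = w.toFun f ↔ w'.toFun f = ν.toFun f)) := by
  refine ⟨fun φ hφ g => ⟨fun hg => ⟨hg.isKeyPol hlt.1, hφ.equivMod hlt.1 hg⟩,
    fun ⟨hkey, hgφ⟩ => hφ.of_isKeyPol_of_equivMod hlt.1 hkey hgφ⟩, fun ν hν hνw => ?_⟩
  have hiff := lt_iff_lt_of_fnLt_of_fnLe hν hνw
  refine ⟨fun g => by simp only [InPhi, hiff], fun f => ?_⟩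
  exact not_iff_not.mp <| (hlt.1 f).lt_iff_ne.symm.trans <| (hiff f).trans (hν.1 f).lt_iff_ne

end MLV
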